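/- The subgroup H of the Grigorchuk group G consisting of elements that preserve the first letter of every binary sequence equals the normal closure of {b, c, d} in G, has index 2 in G, and is generated by {b, c, d, aba, aca, ada}. -/

import Mathlib

/-- The generator `a` of the Grigorchuk group, acting on finite binary sequences. -/
def grigA : List Bool → List Bool
  | [] => []
  | x :: σ => (!x) :: σ

mutual
  /-- The generator `b` of the Grigorchuk group. -/
  def grigB : List Bool → List Bool
    | [] => []
    | false :: σ => false :: grigA σ
    | true :: σ => true :: grigC σ
  /-- The generator `c` of the Grigorchuk group. -/
  def grigC : List Bool → List Bool
    | [] => []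
    | false :: σ => false :: grigA σ
    | true :: σ => true :: grigD σ
  /-- The generator `d` of the Grigorchuk group. -/
  def grigD : List Bool → List Bool
    | [] => []
    | false :: σ => false :: σ
    | true :: σ => true :: grigB σ
end

theorem grigA_involutive : Function.Involutive grigA := by
  intro l
  rcases l with _ | ⟨x, σ⟩
  · rfl
  · cases x <;> rfl

theorem grigBCD_involutive :
    ∀ l : List Bool, grigB (grigB l) = l ∧ grigC (grigC l) = l ∧ grigD (grigD l) = l := by
  intro l
  induction l with
  | nil => exact ⟨rfl, rfl, rfl⟩
  | cons x σ ih =>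
      cases x <;>
        simp [grigB, grigC, grigD, grigA_involutive σ, ih.1, ih.2.1, ih.2.2]

theorem grigB_involutive : Function.Involutive grigB := fun l => (grigBCD_involutive l).1
theorem grigC_involutive : Function.Involutive grigC := fun l => (grigBCD_involutive l).2.1
theorem grigD_involutive : Function.Involutive grigD := fun l => (grigBCD_involutive l).2.2

/-- The generator `a` as a permutation of binary sequences. -/
def aP : Equiv.Perm (List Bool) := grigA_involutive.toPerm
/-- The generator `b` as a permutation of binary sequences. -/
def bP : Equiv.Perm (List Bool) := grigB_involutive.toPerm
/-- The generator `c` as a permutation of binary sequences. -/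
def cP : Equiv.Perm (List Bool) := grigC_involutive.toPerm
/-- The generator `d` as a permutation of binary sequences. -/
def dP : Equiv.Perm (List Bool) := grigD_involutive.toPerm

/-- The Grigorchuk group, as the group of permutations of finite binary sequences
generated by `a`, `b`, `c`, `d`. -/
def Grig : Subgroup (Equiv.Perm (List Bool)) := Subgroup.closure {aP, bP, cP, dP}

/-- `a` as an element of the Grigorchuk group. -/
def ga : Grig := ⟨aP, Subgroup.subset_closure (by simp)⟩
/-- `b` as an element of the Grigorchuk group. -/
def gb : Grig := ⟨bP, Subgroup.subset_closure (by simp)⟩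
/-- `c` as an element of the Grigorchuk group. -/
def gc : Grig := ⟨cP, Subgroup.subset_closure (by simp)⟩
/-- `d` as an element of the Grigorchuk group. -/
def gd : Grig := ⟨dP, Subgroup.subset_closure (by simp)⟩

/-- A permutation of binary sequences preserves the first letter. -/
def FixesFirst (g : Equiv.Perm (List Bool)) : Prop :=
  ∀ (x : Bool) (σ : List Bool), ∃ σ' : List Bool, g (x :: σ) = x :: σ'

/-!
Each generator acts on the first letter of a sequence uniformly (`a` flips it, `b`, `c`, `d` keep
it), so the action on first letters is a homomorphism on `G`; its kernel is the first-level
stabilizer `H`, and it kills `b`, `c`, `d` but not `a`. As `a` is an involution, conjugation by `a`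
permutes `{b, c, d, aba, aca, ada}`, so the subgroup `K` these generate is normal and hence equals
the normal closure `N` of `{b, c, d}`. Left multiplication by any generator preserves `K ∪ aK`, so
`G = K ∪ aK`. Now `N ≤ H`, and an element of `H` in `aK` would put `a` in `H`; so `H = N = K`,
and `K` has index 2.
-/

open Function Subgroup

section InducedPerm

variable {X Y : Type*} (p : X → Y)

def descendingPerms : Subgroup (Equiv.Perm X) where
  carrier := {g | ∃ e : Equiv.Perm Y, Semiconj p g e}
  one_mem' := ⟨1, Semiconj.id_right⟩
  mul_mem' := fun ⟨e, he⟩ ⟨e', he'⟩ => ⟨e * e', he.comp_right he'⟩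
  inv_mem' := fun {g} ⟨e, he⟩ =>
    ⟨e⁻¹, he.inverses_right g.apply_symm_apply e.symm_apply_apply⟩

variable {p}

theorem Function.Semiconj.eq_right_of_surjective (hp : Surjective p) {g : X → X}
    {e e' : Equiv.Perm Y} (h : Semiconj p g e) (h' : Semiconj p g e') : e = e' := by
  ext1 y
  obtain ⟨x, rfl⟩ := hp y
  rw [← h x, h' x]

theorem mem_descendingPerms {g : Equiv.Perm X} :
    g ∈ descendingPerms p ↔ ∃ e : Equiv.Perm Y, Semiconj p g e :=
  Iff.rfl

noncomputable def inducedPerm (g : descendingPerms p) : Equiv.Perm Y :=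
  Classical.choose (mem_descendingPerms.1 g.2)

theorem semiconj_inducedPerm (g : descendingPerms p) : Semiconj p g (inducedPerm g) :=
  Classical.choose_spec (mem_descendingPerms.1 g.2)

noncomputable def inducedPermHom (hp : Surjective p) : descendingPerms p →* Equiv.Perm Y where
  toFun := inducedPerm
  map_one' := (semiconj_inducedPerm 1).eq_right_of_surjective hp Semiconj.id_right
  map_mul' g h := (semiconj_inducedPerm (g * h)).eq_right_of_surjective hp
    ((semiconj_inducedPerm g).comp_right (semiconj_inducedPerm h))

theorem inducedPermHom_eq_of_semiconj (hp : Surjective p) {g : descendingPerms p}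
    {e : Equiv.Perm Y} (h : Semiconj p g e) : inducedPermHom hp g = e :=
  (semiconj_inducedPerm g).eq_right_of_surjective hp h

end InducedPerm

section InvolutionCoset

variable {G M : Type*} [Group G] [Group M] {a : G} {S : Set G}

theorem mem_or_mul_mem_closure_union_conj (ha : a * a = 1) (hgen : closure (insert a S) = ⊤)
    (g : G) :
    g ∈ closure (S ∪ (a * · * a) '' S) ∨ a * g ∈ closure (S ∪ (a * · * a) '' S) := by
  set K := closure (S ∪ (a * · * a) '' S)
  have hS {s} (hs : s ∈ S) : s ∈ K := subset_closure (.inl hs)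
  have haS {s} (hs : s ∈ S) : a * s * a ∈ K := subset_closure (.inr ⟨s, hs, rfl⟩)
  have hainv : a⁻¹ = a := inv_eq_of_mul_eq_one_right ha
  have haa (y : G) : a * (a * y) = y := by rw [← mul_assoc, ha, one_mul]
  have hg : g ∈ closure (insert a S) := hgen ▸ mem_top g
  induction hg using closure_induction_left with
  | one => exact .inl K.one_mem
  | mul_left x hx y _ ih =>
    rcases hx with rfl | hx
    · rw [haa]
      exact ih.symm
    · refine ih.imp (mul_mem (hS hx)) fun h => ?_
      simpa only [mul_assoc, haa] using mul_mem (haS hx) h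
  | inv_mul_cancel x hx y _ ih =>
    rcases hx with rfl | hx
    · rw [hainv, haa]
      exact ih.symm
    · refine ih.imp (mul_mem (inv_mem (hS hx))) fun h => ?_
      simpa only [mul_inv_rev, hainv, mul_assoc, haa] using mul_mem (inv_mem (haS hx)) h

theorem closure_union_conj_normal (ha : a * a = 1) (hgen : closure (insert a S) = ⊤) :
    (closure (S ∪ (a * · * a) '' S)).Normal := by
  have haa (g : G) : a * (a * g) = g := by rw [← mul_assoc, ha, one_mul]
  have hconj : ⇑(MulAut.conj a) = (a * · * a) := by
    funext g
    rw [MulAut.conj_apply, inv_eq_of_mul_eq_one_right ha]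
  rw [← normalizer_eq_top_iff, eq_top_iff, ← hgen, closure_le]
  rintro g (rfl | hg)
  · apply normalizer_le_normalizer_closure
    rw [mem_normalizer_iff_conj_image_eq, hconj, Set.image_union, Set.image_image,
      Set.union_comm]
    simp only [mul_assoc, ha, mul_one, haa, Set.image_id']
  · exact le_normalizer (subset_closure (.inl hg))

theorem normalClosure_eq_closure_union_conj (ha : a * a = 1) (hgen : closure (insert a S) = ⊤) :
    normalClosure S = closure (S ∪ (a * · * a) '' S) := by
  have := closure_union_conj_normal ha hgen
  refine le_antisymm (normalClosure_le_normal (Set.subset_union_left.trans subset_closure)) ?_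
  rw [closure_le]
  rintro _ (hs | ⟨s, hs, rfl⟩)
  · exact subset_normalClosure hs
  · simpa only [SetLike.mem_coe, inv_eq_of_mul_eq_one_right ha] using
      normalClosure_normal.conj_mem s (subset_normalClosure hs) a

theorem mem_or_mul_mem_normalClosure (ha : a * a = 1) (hgen : closure (insert a S) = ⊤)
    (g : G) : g ∈ normalClosure S ∨ a * g ∈ normalClosure S := by
  rw [normalClosure_eq_closure_union_conj ha hgen]
  exact mem_or_mul_mem_closure_union_conj ha hgen g

theorem index_normalClosure_eq_two (ha : a * a = 1) (hgen : closure (insert a S) = ⊤)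
    (haS : a ∉ normalClosure S) : (normalClosure S).index = 2 :=
  index_eq_two_iff_exists_notMem_and'.2
    ⟨a, haS, fun g => (mem_or_mul_mem_normalClosure ha hgen g).symm⟩

theorem ker_eq_normalClosure (ha : a * a = 1) (hgen : closure (insert a S) = ⊤)
    {φ : G →* M} (hS : S ⊆ φ.ker) (haφ : φ a ≠ 1) : φ.ker = normalClosure S := by
  refine le_antisymm (fun g hg => ?_) (normalClosure_le_normal hS)
  refine (mem_or_mul_mem_normalClosure ha hgen g).resolve_right fun hag => haφ ?_
  simpa only [MonoidHom.mem_ker, map_mul, MonoidHom.mem_ker.1 hg, mul_one] using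
    normalClosure_le_normal hS hag

end InvolutionCoset

theorem Equiv.Perm.eq_one_of_apply_some {α : Type*} {e : Equiv.Perm (Option α)}
    (h : ∀ x, e (some x) = some x) : e = 1 := by
  ext1 o
  rcases o with _ | x
  · rcases hn : e none with _ | x
    · rfl
    · exact absurd (e.injective (hn.trans (h x).symm)) (Option.some_ne_none x).symm
  · exact h x

theorem semiconj_head?_aP : Semiconj List.head? aP (Equiv.optionCongr Equiv.boolNot)
  | [] => rfl
  | _ :: _ => rfl

theorem semiconj_head?_bP : Semiconj List.head? bP (1 : Equiv.Perm (Option Bool))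
  | [] => rfl
  | false :: _ => rfl
  | true :: _ => rfl

theorem semiconj_head?_cP : Semiconj List.head? cP (1 : Equiv.Perm (Option Bool))
  | [] => rfl
  | false :: _ => rfl
  | true :: _ => rfl

theorem semiconj_head?_dP : Semiconj List.head? dP (1 : Equiv.Perm (Option Bool))
  | [] => rfl
  | false :: _ => rfl
  | true :: _ => rfl

theorem fixesFirst_iff_of_semiconj_head? {g : Equiv.Perm (List Bool)}
    {e : Equiv.Perm (Option Bool)} (h : Semiconj List.head? g e) : FixesFirst g ↔ e = 1 := by
  have he (x : Bool) (σ : List Bool) : (g (x :: σ)).head? = e (some x) := h (x :: σ)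
  simp only [FixesFirst, ← List.head?_eq_some_iff, he]
  exact ⟨fun hx => Equiv.Perm.eq_one_of_apply_some fun x => hx x [],
    fun h1 _ _ => by rw [h1]; rfl⟩

theorem grig_le_descendingPerms : Grig ≤ descendingPerms List.head? := by
  rw [Grig, closure_le]
  rintro g (rfl | rfl | rfl | rfl)
  exacts [⟨_, semiconj_head?_aP⟩, ⟨_, semiconj_head?_bP⟩, ⟨_, semiconj_head?_cP⟩,
    ⟨_, semiconj_head?_dP⟩]

-- `Option` accounts for the empty sequence, whose `head?` is `none`.
noncomputable def firstLetterHom : Grig →* Equiv.Perm (Option Bool) :=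
  (inducedPermHom List.surjective_head?).comp (inclusion grig_le_descendingPerms)

theorem firstLetterHom_eq_of_semiconj {g : Grig} {e : Equiv.Perm (Option Bool)}
    (h : Semiconj List.head? g e) : firstLetterHom g = e :=
  inducedPermHom_eq_of_semiconj List.surjective_head? h

theorem firstLetterHom_eq_one_iff (g : Grig) : firstLetterHom g = 1 ↔ FixesFirst g :=
  (fixesFirst_iff_of_semiconj_head? (semiconj_inducedPerm _)).symm

theorem ga_mul_self : ga * ga = 1 :=
  Subtype.ext (Equiv.ext grigA_involutive)

theorem closure_ga_gb_gc_gd_eq_top : closure ({ga, gb, gc, gd} : Set Grig) = ⊤ := by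
  have h : ({ga, gb, gc, gd} : Set Grig) =
      ((↑) : Grig → Equiv.Perm (List Bool)) ⁻¹' {aP, bP, cP, dP} := by
    ext x
    simp [ga, gb, gc, gd, Subtype.ext_iff]
  rw [h]
  exact closure_closure_coe_preimage

/-- The subgroup of the Grigorchuk group consisting of the elements preserving the first
letter of every binary sequence equals the normal closure of `{b, c, d}`, has index 2,
and is generated by `{b, c, d, aba, aca, ada}`. -/
theorem grigorchuk_first_level_stabilizer :
    (∀ g : Grig, g ∈ Subgroup.normalClosure ({gb, gc, gd} : Set Grig) ↔
      FixesFirst (g : Equiv.Perm (List Bool))) ∧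
    (Subgroup.normalClosure ({gb, gc, gd} : Set Grig)).index = 2 ∧
    Subgroup.normalClosure ({gb, gc, gd} : Set Grig) =
      Subgroup.closure ({gb, gc, gd, ga * gb * ga, ga * gc * ga, ga * gd * ga} : Set Grig) := by
  have hbcd : ({gb, gc, gd} : Set Grig) ⊆ firstLetterHom.ker := by
    rintro _ (rfl | rfl | rfl)
    exacts [firstLetterHom_eq_of_semiconj semiconj_head?_bP,
      firstLetterHom_eq_of_semiconj semiconj_head?_cP,
      firstLetterHom_eq_of_semiconj semiconj_head?_dP]
  have ha : firstLetterHom ga ≠ 1 := by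
    rw [firstLetterHom_eq_of_semiconj semiconj_head?_aP]
    decide
  have hgen := closure_ga_gb_gc_gd_eq_top
  have hker := ker_eq_normalClosure ga_mul_self hgen hbcd ha
  have haN : ga ∉ Subgroup.normalClosure ({gb, gc, gd} : Set Grig) := by
    rwa [← hker, MonoidHom.mem_ker]
  refine ⟨fun g => ?_, index_normalClosure_eq_two ga_mul_self hgen haN, ?_⟩
  · rw [← hker, MonoidHom.mem_ker, firstLetterHom_eq_one_iff]
  · rw [normalClosure_eq_closure_union_conj ga_mul_self hgen]
    simp only [Set.image_insert_eq, Set.image_singleton, Set.insert_union, Set.singleton_union]
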